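/- arXiv:1110.1751 — 4 statements merged into one kernel-verified Lean document; each statement's English description precedes it below -/
import Mathlib

section
/- Let A be an m×m row-stochastic matrix and π a stochastic vector with all entries bounded below by p* > 0, satisfying π^T A = π^T. Then A is balanced with coefficient α = p*/(1 − (m−1)p*): for every nonempty proper S ⊂ [m], A_{SS̄} ≥ (p*/(1 − (m−1)p*))·A_{S̄S}. -/
/-!
For a stationary `π`, the `π`-weighted flows `∑_{i∈S, j∉S} π_i A_ij` and `∑_{i∉S, j∈S} π_i A_ij`
across any cut coincide. Since every `π_i` lies between `p*` and `1 - (m - 1)p*`, the weighted flows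
are squeezed between these multiples of the unweighted ones.
-/

open Finset Matrix

theorem sum_flow_out_eq_sum_flow_in {ι R : Type*} [Fintype ι] [DecidableEq ι] [CommRing R]
    {A : Matrix ι ι R} (hrow : ∀ i, ∑ j, A i j = 1) {π : ι → R} (hπA : vecMul π A = π)
    (S : Finset ι) :
    ∑ i ∈ S, ∑ j ∈ Sᶜ, π i * A i j = ∑ i ∈ Sᶜ, ∑ j ∈ S, π i * A i j := by
  have hout : ∑ i ∈ S, π i = ∑ i ∈ S, ∑ j ∈ S, π i * A i j + ∑ i ∈ S, ∑ j ∈ Sᶜ, π i * A i j := by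
    rw [← sum_add_distrib]
    refine sum_congr rfl fun i _ => ?_
    rw [← mul_sum, ← mul_sum, ← mul_add, add_comm, sum_compl_add_sum, hrow, mul_one]
  have hin : ∑ j ∈ S, π j = ∑ i ∈ S, ∑ j ∈ S, π i * A i j + ∑ i ∈ Sᶜ, ∑ j ∈ S, π i * A i j := by
    rw [sum_comm (s := S) (t := S), sum_comm (s := Sᶜ), ← sum_add_distrib]
    refine sum_congr rfl fun j _ => ?_
    rw [add_comm, sum_compl_add_sum, ← congrFun hπA j]
    rfl
  linear_combination hin - hout

theorem le_one_sub_card_sub_one_mul {ι R : Type*} [Fintype ι] [DecidableEq ι] [CommRing R]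
    [PartialOrder R] [IsOrderedRing R] {π : ι → R} (hπsum : ∑ i, π i = 1) {p : R}
    (hπp : ∀ i, p ≤ π i) (i : ι) :
    π i ≤ 1 - ((Fintype.card ι : R) - 1) * p := by
  have hcard : ((({i}ᶜ : Finset ι).card : ℕ) : R) = (Fintype.card ι : R) - 1 := by
    rw [card_compl, card_singleton, Nat.cast_sub (Fintype.card_pos_iff.mpr ⟨i⟩), Nat.cast_one]
  have hrest : ((Fintype.card ι : R) - 1) * p ≤ ∑ j ∈ {i}ᶜ, π j := by
    rw [← hcard, ← nsmul_eq_mul]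
    exact card_nsmul_le_sum _ _ _ fun j _ => hπp j
  have hsplit : ∑ j ∈ {i}ᶜ, π j + π i = 1 := by
    rw [← hπsum, ← sum_compl_add_sum {i}, sum_singleton]
  linear_combination hsplit + hrest

theorem stmt_6_general (m : ℕ) (A : Matrix (Fin m) (Fin m) ℝ)
    (hnonneg : ∀ i j, 0 ≤ A i j) (hrow : ∀ i, ∑ j, A i j = 1)
    (π : Fin m → ℝ) (hπsum : ∑ i, π i = 1)
    (p : ℝ) (hπp : ∀ i, p ≤ π i)
    (hpm : ((m : ℝ) - 1) * p < 1)
    (hπA : Matrix.vecMul π A = π) :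
    ∀ S : Finset (Fin m), S.Nonempty → S ≠ Finset.univ →
      (p / (1 - ((m : ℝ) - 1) * p)) * ∑ i ∈ Sᶜ, ∑ j ∈ S, A i j ≤
        ∑ i ∈ S, ∑ j ∈ Sᶜ, A i j := by
  intro S _ _
  have hπmax : ∀ i, π i ≤ 1 - ((m : ℝ) - 1) * p := by
    simpa using le_one_sub_card_sub_one_mul hπsum hπp
  rw [div_mul_eq_mul_div, div_le_iff₀ (by linarith), mul_sum, mul_comm]
  calc ∑ i ∈ Sᶜ, p * ∑ j ∈ S, A i j
      ≤ ∑ i ∈ Sᶜ, ∑ j ∈ S, π i * A i j := by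
        gcongr with i _
        rw [mul_sum]
        gcongr with j _
        · exact hnonneg i j
        · exact hπp i
    _ = ∑ i ∈ S, ∑ j ∈ Sᶜ, π i * A i j := (sum_flow_out_eq_sum_flow_in hrow hπA S).symm
    _ ≤ (1 - ((m : ℝ) - 1) * p) * ∑ i ∈ S, ∑ j ∈ Sᶜ, A i j := by
        rw [mul_sum]
        gcongr with i _
        rw [mul_sum]
        gcongr with j _
        · exact hnonneg i j
        · exact hπmax i

theorem stmt_6 (m : ℕ) (A : Matrix (Fin m) (Fin m) ℝ)
    (hnonneg : ∀ i j, 0 ≤ A i j) (hrow : ∀ i, ∑ j, A i j = 1)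
    (π : Fin m → ℝ) (hπsum : ∑ i, π i = 1)
    (p : ℝ) (hp : 0 < p) (hπp : ∀ i, p ≤ π i)
    (hpm : ((m : ℝ) - 1) * p < 1)
    (hπA : Matrix.vecMul π A = π) :
    ∀ S : Finset (Fin m), S.Nonempty → S ≠ Finset.univ →
      (p / (1 - ((m : ℝ) - 1) * p)) * ∑ i ∈ Sᶜ, ∑ j ∈ S, A i j ≤
        ∑ i ∈ S, ∑ j ∈ Sᶜ, A i j :=
  stmt_6_general m A hnonneg hrow π hπsum p hπp hpm hπA
end

section
/- Let A be an m×m row-stochastic matrix and suppose π, σ are stochastic vectors in ℝ^m with σ^T A = π^T. Define for x ∈ ℝ^m and a convex function g: ℝ → ℝ the quantity V(x) = Σ_i π_i g(x_i) − g(π^T x) and V'(y) = Σ_i σ_i g(y_i) − g(σ^T y). Then for y = A x, V'(y) ≤ V(x). -/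
open Finset Matrix

theorem stmt_14 (m : ℕ) (A : Matrix (Fin m) (Fin m) ℝ)
    (hnonneg : ∀ i j, 0 ≤ A i j) (hrow : ∀ i, ∑ j, A i j = 1)
    (π σ : Fin m → ℝ)
    (hπnonneg : ∀ i, 0 ≤ π i) (hπsum : ∑ i, π i = 1)
    (hσnonneg : ∀ i, 0 ≤ σ i) (hσsum : ∑ i, σ i = 1)
    (hσA : Matrix.vecMul σ A = π)
    (g : ℝ → ℝ) (hg : ConvexOn ℝ Set.univ g)
    (x : Fin m → ℝ) :
    (∑ i, σ i * g (A.mulVec x i)) - g (σ ⬝ᵥ A.mulVec x) ≤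
      (∑ i, π i * g (x i)) - g (π ⬝ᵥ x) := by
  have hdot : σ ⬝ᵥ A.mulVec x = π ⬝ᵥ x := by
    rw [← hσA]; exact Matrix.dotProduct_mulVec σ A x
  rw [hdot]
  have h1 : ∀ i, g (A.mulVec x i) ≤ ∑ j, A i j * g (x j) := by
    intro i
    have := hg.map_sum_le (t := Finset.univ) (w := fun j => A i j) (p := x)
      (fun j _ => hnonneg i j) (hrow i) (fun j _ => Set.mem_univ _)
    simpa [Matrix.mulVec, dotProduct, smul_eq_mul] using this
  have h2 : ∑ i, σ i * g (A.mulVec x i) ≤ ∑ i, σ i * ∑ j, A i j * g (x j) :=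
    Finset.sum_le_sum fun i _ => mul_le_mul_of_nonneg_left (h1 i) (hσnonneg i)
  have h3 : ∑ i, σ i * ∑ j, A i j * g (x j) = ∑ j, π j * g (x j) := by
    simp_rw [Finset.mul_sum]
    rw [Finset.sum_comm]
    refine Finset.sum_congr rfl fun j _ => ?_
    have : π j = ∑ i, σ i * A i j := by rw [← hσA]; rfl
    rw [this, Finset.sum_mul]
    ring_nf
    exact Finset.sum_congr rfl fun i _ => by ring
  linarith
end

section
/- Let A be an m×m row-stochastic matrix and π, σ stochastic vectors with σ^T A = π^T. Define V(x) = Σ_i π_i x_i² − (π^T x)² and V'(y) = Σ_i σ_i y_i² − (σ^T y)². Then V(x) − V'(Ax) = Σ_{i<j} (A^T diag(σ) A)_{ij} (x_i − x_j)². -/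
open Finset Matrix

theorem stmt_15 (m : ℕ) (A : Matrix (Fin m) (Fin m) ℝ)
    (hnonneg : ∀ i j, 0 ≤ A i j) (hrow : ∀ i, ∑ j, A i j = 1)
    (π σ : Fin m → ℝ)
    (hπnonneg : ∀ i, 0 ≤ π i) (hπsum : ∑ i, π i = 1)
    (hσnonneg : ∀ i, 0 ≤ σ i) (hσsum : ∑ i, σ i = 1)
    (hσA : Matrix.vecMul σ A = π)
    (x : Fin m → ℝ) :
    ((∑ i, π i * x i ^ 2) - (π ⬝ᵥ x) ^ 2) -
        ((∑ i, σ i * (A.mulVec x i) ^ 2) - (σ ⬝ᵥ A.mulVec x) ^ 2) =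
      ∑ i, ∑ j ∈ Finset.univ.filter (fun j => i < j),
        (Aᵀ * Matrix.diagonal σ * A) i j * (x i - x j) ^ 2 := by
  set B : Matrix (Fin m) (Fin m) ℝ := Aᵀ * Matrix.diagonal σ * A with hBdef
  have hB : ∀ i j, B i j = ∑ k, σ k * A k i * A k j := by
    intro i j
    rw [hBdef, Matrix.mul_assoc]
    simp only [Matrix.mul_apply, Matrix.diagonal_apply, ite_mul, zero_mul,
      Finset.sum_ite_eq, Finset.mem_univ, if_true, Matrix.transpose_apply]
    exact Finset.sum_congr rfl fun k _ => by ring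
  have hπ : ∀ i, π i = ∑ k, σ k * A k i := by
    intro i
    rw [← hσA]
    simp [Matrix.vecMul, dotProduct]
  have hrowB : ∀ i, ∑ j, B i j = π i := by
    intro i
    simp only [hB]
    rw [Finset.sum_comm, hπ]
    refine Finset.sum_congr rfl fun k _ => ?_
    rw [← Finset.mul_sum, hrow k, mul_one]
  have hBsym : ∀ i j, B i j = B j i := by
    intro i j
    rw [hB, hB]
    exact Finset.sum_congr rfl fun k _ => by ring
  have hcolB : ∀ j, ∑ i, B i j = π j := by
    intro j
    rw [← hrowB j]
    exact Finset.sum_congr rfl fun i _ => hBsym i j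
  have hdot : σ ⬝ᵥ A.mulVec x = π ⬝ᵥ x := by
    rw [Matrix.dotProduct_mulVec, hσA]
  have h3 : ∑ k, σ k * (A.mulVec x k) ^ 2 = ∑ i, ∑ j, B i j * (x i * x j) := by
    have per_k : ∀ k, σ k * (A.mulVec x k) ^ 2
        = ∑ i, ∑ j, σ k * A k i * A k j * (x i * x j) := by
      intro k
      simp only [Matrix.mulVec, dotProduct, pow_two]
      rw [Finset.sum_mul_sum, Finset.mul_sum]
      refine Finset.sum_congr rfl fun i _ => ?_
      rw [Finset.mul_sum]
      exact Finset.sum_congr rfl fun j _ => by ring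
    calc ∑ k, σ k * (A.mulVec x k) ^ 2
        = ∑ k, ∑ i, ∑ j, σ k * A k i * A k j * (x i * x j) :=
          Finset.sum_congr rfl fun k _ => per_k k
      _ = ∑ i, ∑ k, ∑ j, σ k * A k i * A k j * (x i * x j) := Finset.sum_comm
      _ = ∑ i, ∑ j, ∑ k, σ k * A k i * A k j * (x i * x j) :=
          Finset.sum_congr rfl fun i _ => Finset.sum_comm
      _ = ∑ i, ∑ j, B i j * (x i * x j) := by
          refine Finset.sum_congr rfl fun i _ => Finset.sum_congr rfl fun j _ => ?_
          rw [hB, Finset.sum_mul]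
  -- the full double sum of f
  set f : Fin m → Fin m → ℝ := fun i j => B i j * (x i - x j) ^ 2 with hf
  have E1 : ∑ i, ∑ j, f i j
      = (∑ i, π i * x i ^ 2) + (∑ i, π i * x i ^ 2)
        - 2 * ∑ i, ∑ j, B i j * (x i * x j) := by
    have expand : ∀ i j, f i j
        = B i j * x i ^ 2 + B i j * x j ^ 2 - 2 * (B i j * (x i * x j)) := by
      intro i j; simp only [hf]; ring
    have inner : ∀ i, ∑ j, (B i j * x i ^ 2 + B i j * x j ^ 2 - 2 * (B i j * (x i * x j)))
        = π i * x i ^ 2 + (∑ j, B i j * x j ^ 2) - 2 * ∑ j, B i j * (x i * x j) := by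
      intro i
      rw [Finset.sum_sub_distrib, Finset.sum_add_distrib, ← Finset.sum_mul, hrowB,
        ← Finset.mul_sum]
    have h2 : ∑ i, ∑ j, B i j * x j ^ 2 = ∑ i, π i * x i ^ 2 := by
      rw [Finset.sum_comm]
      refine Finset.sum_congr rfl fun j _ => ?_
      rw [← Finset.sum_mul, hcolB]
    calc ∑ i, ∑ j, f i j
        = ∑ i, (π i * x i ^ 2 + (∑ j, B i j * x j ^ 2) - 2 * ∑ j, B i j * (x i * x j)) := by
          refine Finset.sum_congr rfl fun i _ => ?_
          rw [← inner i]
          exact Finset.sum_congr rfl fun j _ => expand i j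
      _ = (∑ i, π i * x i ^ 2) + (∑ i, ∑ j, B i j * x j ^ 2)
            - 2 * ∑ i, ∑ j, B i j * (x i * x j) := by
          rw [Finset.sum_sub_distrib, Finset.sum_add_distrib, ← Finset.mul_sum]
      _ = (∑ i, π i * x i ^ 2) + (∑ i, π i * x i ^ 2)
            - 2 * ∑ i, ∑ j, B i j * (x i * x j) := by rw [h2]
  have hsplit : ∑ i, ∑ j, f i j
      = 2 * ∑ i, ∑ j ∈ Finset.univ.filter (fun j => i < j), f i j := by
    have point : ∀ i j, f i j
        = (if i < j then f i j else 0) + (if j < i then f i j else 0) := by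
      intro i j
      rcases lt_trichotomy i j with h | h | h
      · simp [h, not_lt_of_gt h]
      · subst h; simp [hf]
      · simp [h, not_lt_of_gt h]
    have fsym : ∀ i j, f j i = f i j := by
      intro i j; simp only [hf, hBsym i j]; ring
    calc ∑ i, ∑ j, f i j
        = ∑ i, ∑ j, ((if i < j then f i j else 0) + (if j < i then f i j else 0)) :=
          Finset.sum_congr rfl fun i _ => Finset.sum_congr rfl fun j _ => point i j
      _ = (∑ i, ∑ j, if i < j then f i j else 0)
            + (∑ i, ∑ j, if j < i then f i j else 0) := by
          rw [← Finset.sum_add_distrib]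
          exact Finset.sum_congr rfl fun i _ => by rw [← Finset.sum_add_distrib]
      _ = (∑ i, ∑ j, if i < j then f i j else 0)
            + (∑ i, ∑ j, if i < j then f i j else 0) := by
          congr 1
          rw [Finset.sum_comm]
          exact Finset.sum_congr rfl fun i _ => Finset.sum_congr rfl fun j _ => by
            by_cases h : i < j <;> simp [h, fsym]
      _ = 2 * ∑ i, ∑ j ∈ Finset.univ.filter (fun j => i < j), f i j := by
          rw [two_mul]
          congr 1 <;>
          exact Finset.sum_congr rfl fun i _ => (Finset.sum_filter _ _).symm
  rw [hdot, h3]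
  have : (∑ i, ∑ j ∈ Finset.univ.filter (fun j => i < j), B i j * (x i - x j) ^ 2)
      = ∑ i, ∑ j ∈ Finset.univ.filter (fun j => i < j), f i j := rfl
  rw [this]
  linarith [E1, hsplit]
end

section
/- Let A be an m×m row-stochastic matrix, π, σ stochastic vectors with σ^T A = π^T, and suppose σ_i ≥ p* > 0 for all i. Then with V(x) = Σ_i π_i x_i² − (π^T x)² and V'(y) = Σ_i σ_i y_i² − (σ^T y)², one has for y = Ax: V(x) − V'(y) ≥ p*·Σ_{i<j} (A^T A)_{ij}·(x_i − x_j)². -/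
open Finset Matrix

/-!
Row `k` of `A` is a probability vector, and `V(x) − V'(Ax)` equals the `σ`-average of the
variances of `x` under these rows. Each row variance is `∑_{i<j} A k i * A k j * (x i − x j)²`,
a sum of nonnegative terms, so bounding `σ k ≥ p` and summing over `k` produces the entries
`(Aᵀ A) i j = ∑ k, A k i * A k j`.
-/

variable {ι κ : Type*} [Fintype ι] [Fintype κ]

/-- The paper's `V` and `V'` are `weightedVar π` and `weightedVar σ`. -/
noncomputable def weightedVar (w x : ι → ℝ) : ℝ :=
  ∑ i, w i * x i ^ 2 - (w ⬝ᵥ x) ^ 2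

lemma weightedVar_vecMul_sub_weightedVar_mulVec (σ : κ → ℝ) (A : Matrix κ ι ℝ) (x : ι → ℝ) :
    weightedVar (σ ᵥ* A) x - weightedVar σ (A *ᵥ x) = ∑ k, σ k * weightedVar (A k) x := by
  have hmean : (σ ᵥ* A) ⬝ᵥ x = σ ⬝ᵥ (A *ᵥ x) := (dotProduct_mulVec σ A x).symm
  have hmoment : ∑ i, (σ ᵥ* A) i * x i ^ 2 = ∑ k, σ k * ∑ i, A k i * x i ^ 2 := by
    simp only [vecMul, dotProduct, sum_mul, mul_sum, mul_assoc]
    exact sum_comm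
  simp only [weightedVar, hmean, hmoment, mul_sub, sum_sub_distrib]
  simp only [mulVec, dotProduct]
  ring

lemma sum_sum_eq_two_mul_sum_sum_lt [LinearOrder ι] (f : ι → ι → ℝ)
    (hsymm : ∀ i j, f i j = f j i) (hdiag : ∀ i, f i i = 0) :
    ∑ i, ∑ j, f i j = 2 * ∑ i, ∑ j ∈ univ.filter (fun j => i < j), f i j := by
  have hrow : ∀ i, ∑ j, f i j =
      ∑ j ∈ univ.filter (fun j => i < j), f i j + ∑ j ∈ univ.filter (fun j => j < i), f i j := by
    intro i
    rw [← sum_filter_add_sum_filter_not univ (fun j => i < j)]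
    congr 1
    have hle : univ.filter (fun j => ¬ i < j) = insert i (univ.filter (fun j => j < i)) := by
      ext j
      simp [le_iff_lt_or_eq, eq_comm, or_comm]
    rw [hle, sum_insert (by simp), hdiag, zero_add]
  have hswap : ∑ i, ∑ j ∈ univ.filter (fun j => j < i), f i j =
      ∑ i, ∑ j ∈ univ.filter (fun j => i < j), f i j := by
    rw [sum_comm' (t' := univ) (s' := fun j => univ.filter (fun i => j < i)) (by simp)]
    exact sum_congr rfl fun i _ => sum_congr rfl fun j _ => hsymm j i
  rw [sum_congr rfl fun i _ => hrow i, sum_add_distrib, hswap, two_mul]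

lemma weightedVar_eq_sum_lt [LinearOrder ι] (w x : ι → ℝ) (hw : ∑ i, w i = 1) :
    weightedVar w x = ∑ i, ∑ j ∈ univ.filter (fun j => i < j), w i * w j * (x i - x j) ^ 2 := by
  have hdouble : ∑ i, ∑ j, w i * w j * (x i - x j) ^ 2 = 2 * weightedVar w x := by
    have hexpand : ∀ i j, w i * w j * (x i - x j) ^ 2 =
        w i * x i ^ 2 * w j + w i * (w j * x j ^ 2) - 2 * (w i * x i * (w j * x j)) := by
      intro i j; ring
    simp only [hexpand, sum_sub_distrib, sum_add_distrib, ← mul_sum, ← sum_mul, hw,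
      weightedVar, dotProduct]
    ring
  have := sum_sum_eq_two_mul_sum_sum_lt (fun i j => w i * w j * (x i - x j) ^ 2)
    (fun i j => by ring) (fun i => by ring)
  linarith

lemma weightedVar_nonneg [LinearOrder ι] {w : ι → ℝ} (hw₀ : ∀ i, 0 ≤ w i) (hw : ∑ i, w i = 1)
    (x : ι → ℝ) : 0 ≤ weightedVar w x := by
  rw [weightedVar_eq_sum_lt w x hw]
  exact sum_nonneg fun i _ => sum_nonneg fun j _ =>
    mul_nonneg (mul_nonneg (hw₀ i) (hw₀ j)) (sq_nonneg _)

lemma sum_sum_lt_transpose_mul_self_mul [LinearOrder ι] (A : Matrix κ ι ℝ) (g : ι → ι → ℝ) :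
    ∑ i, ∑ j ∈ univ.filter (fun j => i < j), (Aᵀ * A) i j * g i j =
      ∑ k, ∑ i, ∑ j ∈ univ.filter (fun j => i < j), A k i * A k j * g i j := by
  simp only [mul_apply, transpose_apply, sum_mul]
  rw [sum_comm]
  refine sum_congr rfl fun i _ => ?_
  exact sum_comm

theorem stmt_16_general (m : ℕ) (A : Matrix (Fin m) (Fin m) ℝ)
    (hnonneg : ∀ i j, 0 ≤ A i j) (hrow : ∀ i, ∑ j, A i j = 1)
    (π σ : Fin m → ℝ)
    (p : ℝ) (hσp : ∀ i, p ≤ σ i)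
    (hσA : Matrix.vecMul σ A = π)
    (x : Fin m → ℝ) :
    p * ∑ i, ∑ j ∈ Finset.univ.filter (fun j => i < j),
        (Aᵀ * A) i j * (x i - x j) ^ 2 ≤
      ((∑ i, π i * x i ^ 2) - (π ⬝ᵥ x) ^ 2) -
        ((∑ i, σ i * (A.mulVec x i) ^ 2) - (σ ⬝ᵥ A.mulVec x) ^ 2) := by
  calc p * ∑ i, ∑ j ∈ univ.filter (fun j => i < j), (Aᵀ * A) i j * (x i - x j) ^ 2
      = ∑ k, p * weightedVar (A k) x := by
        simp only [sum_sum_lt_transpose_mul_self_mul, mul_sum,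
          weightedVar_eq_sum_lt _ x (hrow _)]
    _ ≤ ∑ k, σ k * weightedVar (A k) x := sum_le_sum fun k _ =>
        mul_le_mul_of_nonneg_right (hσp k) (weightedVar_nonneg (hnonneg k) (hrow k) x)
    _ = weightedVar π x - weightedVar σ (A *ᵥ x) := by
        rw [← hσA, weightedVar_vecMul_sub_weightedVar_mulVec]

theorem stmt_16 (m : ℕ) (A : Matrix (Fin m) (Fin m) ℝ)
    (hnonneg : ∀ i j, 0 ≤ A i j) (hrow : ∀ i, ∑ j, A i j = 1)
    (π σ : Fin m → ℝ)
    (hπnonneg : ∀ i, 0 ≤ π i) (hπsum : ∑ i, π i = 1)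
    (hσsum : ∑ i, σ i = 1)
    (p : ℝ) (hp : 0 < p) (hσp : ∀ i, p ≤ σ i)
    (hσA : Matrix.vecMul σ A = π)
    (x : Fin m → ℝ) :
    p * ∑ i, ∑ j ∈ Finset.univ.filter (fun j => i < j),
        (Aᵀ * A) i j * (x i - x j) ^ 2 ≤
      ((∑ i, π i * x i ^ 2) - (π ⬝ᵥ x) ^ 2) -
        ((∑ i, σ i * (A.mulVec x i) ^ 2) - (σ ⬝ᵥ A.mulVec x) ^ 2) :=
  stmt_16_general m A hnonneg hrow π σ p hσp hσA x
end
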